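/- arXiv:0910.5502 — 2 statements merged into one kernel-verified Lean document; each statement's English description precedes it below -/
import Mathlib

section
/- For real numbers p_i, p_j, p_k ≥ 0 and x_i, x_j, x_k ≥ 0 with x_i + x_j + x_k ≤ c, if (p_i - P_{-i}) - P_{-i}·(x_i+x_j+x_k-c)/γ = 0 and the two analogous equations hold for j and k (with P_{-i} = (p_j+p_k)/2, P_{-j} = (p_k+p_i)/2, P_{-k} = (p_i+p_j)/2, γ > 0), then p_i = p_j = p_k and p_i·(x_i + x_j + x_k - c) = 0. -/
/-!
Summing the three conditions makes the price terms cancel, leaving `(pᵢ + pⱼ + pₖ) · t = 0`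
for the congestion term `t = (xᵢ + xⱼ + xₖ - c) / γ`. Either all (nonnegative) prices vanish,
or `t = 0`, in which case each price is the average of the other two, so all are equal.
-/

section PriceConditions

variable {pi pj pk t : ℝ}

theorem price_sum_mul_eq_zero
    (hi : (pi - (pj + pk) / 2) - (pj + pk) / 2 * t = 0)
    (hj : (pj - (pk + pi) / 2) - (pk + pi) / 2 * t = 0)
    (hk : (pk - (pi + pj) / 2) - (pi + pj) / 2 * t = 0) :
    (pi + pj + pk) * t = 0 := by
  linear_combination -hi - hj - hk

theorem prices_eq_and_mul_eq_zero
    (hpi : 0 ≤ pi) (hpj : 0 ≤ pj) (hpk : 0 ≤ pk)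
    (hi : (pi - (pj + pk) / 2) - (pj + pk) / 2 * t = 0)
    (hj : (pj - (pk + pi) / 2) - (pk + pi) / 2 * t = 0)
    (hk : (pk - (pi + pj) / 2) - (pi + pj) / 2 * t = 0) :
    (pi = pj ∧ pj = pk) ∧ pi * t = 0 := by
  rcases mul_eq_zero.mp (price_sum_mul_eq_zero hi hj hk) with hsum | ht
  · obtain ⟨rfl, rfl, rfl⟩ : pi = 0 ∧ pj = 0 ∧ pk = 0 :=
      ⟨by linarith, by linarith, by linarith⟩
    simp
  · subst ht
    exact ⟨⟨by linarith, by linarith⟩, mul_zero pi⟩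

end PriceConditions

theorem stmt_1_general (pi pj pk xi xj xk c γ : ℝ)
    (hpi : 0 ≤ pi) (hpj : 0 ≤ pj) (hpk : 0 ≤ pk)
    (hγ : 0 < γ)
    (hi : (pi - (pj + pk) / 2) - (pj + pk) / 2 * ((xi + xj + xk - c) / γ) = 0)
    (hj : (pj - (pk + pi) / 2) - (pk + pi) / 2 * ((xi + xj + xk - c) / γ) = 0)
    (hk : (pk - (pi + pj) / 2) - (pi + pj) / 2 * ((xi + xj + xk - c) / γ) = 0) :
    (pi = pj ∧ pj = pk) ∧ pi * (xi + xj + xk - c) = 0 := by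
  obtain ⟨hprices, hslack⟩ := prices_eq_and_mul_eq_zero hpi hpj hpk hi hj hk
  refine ⟨hprices, ?_⟩
  rw [← mul_div_cancel₀ (xi + xj + xk - c) hγ.ne', mul_left_comm, hslack, mul_zero]

/-- Three-user link: the first-order conditions on prices at a Nash equilibrium
imply equal prices and complementary slackness. -/
theorem stmt_1 (pi pj pk xi xj xk c γ : ℝ)
    (hpi : 0 ≤ pi) (hpj : 0 ≤ pj) (hpk : 0 ≤ pk)
    (hxi : 0 ≤ xi) (hxj : 0 ≤ xj) (hxk : 0 ≤ xk)
    (hγ : 0 < γ) (hcap : xi + xj + xk ≤ c)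
    (hi : (pi - (pj + pk) / 2) - (pj + pk) / 2 * ((xi + xj + xk - c) / γ) = 0)
    (hj : (pj - (pk + pi) / 2) - (pk + pi) / 2 * ((xi + xj + xk - c) / γ) = 0)
    (hk : (pk - (pi + pj) / 2) - (pi + pj) / 2 * ((xi + xj + xk - c) / γ) = 0) :
    (pi = pj ∧ pj = pk) ∧ pi * (xi + xj + xk - c) = 0 :=
  stmt_1_general pi pj pk xi xj xk c γ hpi hpj hpk hγ hi hj hk
end

section
/- Let G be a finite set with |G| ≥ 2, let p : G → ℝ with p_i ≥ 0 for all i, define P_{-i} := (∑_{j ≠ i} p_j)/(|G|-1), and let x : G → ℝ with x_i ≥ 0, E_{-i} := ∑_{j≠i} x_j - c, and suppose ∑_{i∈G} x_i ≤ c with γ > 0. If for every i ∈ G, (p_i - P_{-i}) - P_{-i}·(E_{-i} + x_i)/γ = 0, then summing over i gives ∑_{i∈G} P_{-i}·(E_{-i} + x_i) = 0, and consequently P_{-i}·(E_{-i}+x_i) = 0 and p_i = P_{-i} for every i ∈ G. -/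
open Finset

/-!
Write `P i` for the average price of the users other than `i` and `E i` for the excess demand
`∑_{j ≠ i} x_j - c + x_i`, which equals `∑_j x_j - c ≤ 0` for every `i`. The first-order
conditions say `p i - P i = P i * E i / γ`. The left-hand sides sum to zero, since every `p j`
enters exactly `|G| - 1` of the leave-one-out sums; hence so do the right-hand sides. These are
all nonpositive, so each vanishes, and then `p i = P i`.
-/

theorem Finset.sum_sum_erase {ι R : Type*} [DecidableEq ι] [CommRing R] (s : Finset ι)
    (f : ι → R) :
    ∑ i ∈ s, ∑ j ∈ s.erase i, f j = ((s.card : R) - 1) * ∑ j ∈ s, f j := by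
  rw [sum_congr rfl fun i hi => sum_erase_eq_sub hi, sum_sub_distrib, sum_const, nsmul_eq_mul]
  ring

theorem Finset.sum_sub_sum_erase_div_eq_zero {ι K : Type*} [DecidableEq ι] [Field K]
    (s : Finset ι) (f : ι → K) (hs : (s.card : K) - 1 ≠ 0) :
    ∑ i ∈ s, (f i - (∑ j ∈ s.erase i, f j) / ((s.card : K) - 1)) = 0 := by
  rw [sum_sub_distrib, ← sum_div, sum_sum_erase, mul_div_cancel_left₀ _ hs, sub_self]

theorem Finset.eq_zero_of_sub_mul_div_eq_zero {ι K : Type*} [Field K] [LinearOrder K]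
    [IsStrictOrderedRing K] {s : Finset ι} {d P E : ι → K} {γ : K} (hγ : 0 < γ)
    (hP : ∀ i ∈ s, 0 ≤ P i) (hE : ∀ i ∈ s, E i ≤ 0) (hd : ∑ i ∈ s, d i = 0)
    (h : ∀ i ∈ s, d i - P i * (E i / γ) = 0) :
    ∑ i ∈ s, P i * E i = 0 ∧ (∀ i ∈ s, P i * E i = 0) ∧ ∀ i ∈ s, d i = 0 := by
  have hsum : ∑ i ∈ s, P i * E i = 0 := by
    have hdiv : (∑ i ∈ s, P i * E i) / γ = 0 := by
      rw [← hd, sum_div]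
      exact sum_congr rfl fun i hi => by rw [mul_div_assoc]; exact (sub_eq_zero.mp (h i hi)).symm
    rwa [div_eq_zero_iff, or_iff_left hγ.ne'] at hdiv
  have hterm : ∀ i ∈ s, P i * E i = 0 :=
    (sum_eq_zero_iff_of_nonpos fun i hi => mul_nonpos_of_nonneg_of_nonpos (hP i hi) (hE i hi)).mp
      hsum
  refine ⟨hsum, hterm, fun i hi => ?_⟩
  simpa only [← mul_div_assoc, hterm i hi, zero_div, sub_zero] using h i hi

theorem stmt_2_general {ι : Type*} [DecidableEq ι] (G : Finset ι) (hG : 2 ≤ G.card)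
    (p x : ι → ℝ) (c γ : ℝ) (hγ : 0 < γ)
    (hp : ∀ i ∈ G, 0 ≤ p i)
    (hcap : ∑ i ∈ G, x i ≤ c)
    (hfoc : ∀ i ∈ G,
      (p i - (∑ j ∈ G.erase i, p j) / ((G.card : ℝ) - 1)) -
        (∑ j ∈ G.erase i, p j) / ((G.card : ℝ) - 1) *
          (((∑ j ∈ G.erase i, x j) - c + x i) / γ) = 0) :
    (∑ i ∈ G, (∑ j ∈ G.erase i, p j) / ((G.card : ℝ) - 1) *
        ((∑ j ∈ G.erase i, x j) - c + x i)) = 0 ∧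
    (∀ i ∈ G, (∑ j ∈ G.erase i, p j) / ((G.card : ℝ) - 1) *
        ((∑ j ∈ G.erase i, x j) - c + x i) = 0) ∧
    (∀ i ∈ G, p i = (∑ j ∈ G.erase i, p j) / ((G.card : ℝ) - 1)) := by
  have hn : (0 : ℝ) < (G.card : ℝ) - 1 := by
    have : (2 : ℝ) ≤ G.card := by exact_mod_cast hG
    linarith
  have hP (i : ι) (_ : i ∈ G) : 0 ≤ (∑ j ∈ G.erase i, p j) / ((G.card : ℝ) - 1) :=
    div_nonneg (sum_nonneg fun j hj => hp j (mem_of_mem_erase hj)) hn.le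
  have hE (i : ι) (hi : i ∈ G) : (∑ j ∈ G.erase i, x j) - c + x i ≤ 0 := by
    rw [sum_erase_eq_sub hi]
    linarith
  obtain ⟨hsum, hterm, hd⟩ := eq_zero_of_sub_mul_div_eq_zero hγ hP hE
    (sum_sub_sum_erase_div_eq_zero G p hn.ne') hfoc
  exact ⟨hsum, hterm, fun i hi => sub_eq_zero.mp (hd i hi)⟩

/-- Nash equilibrium price characterization at a link with many users. -/
theorem stmt_2 {ι : Type*} [DecidableEq ι] (G : Finset ι) (hG : 2 ≤ G.card)
    (p x : ι → ℝ) (c γ : ℝ) (hγ : 0 < γ)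
    (hp : ∀ i ∈ G, 0 ≤ p i) (hx : ∀ i ∈ G, 0 ≤ x i)
    (hcap : ∑ i ∈ G, x i ≤ c)
    (hfoc : ∀ i ∈ G,
      (p i - (∑ j ∈ G.erase i, p j) / ((G.card : ℝ) - 1)) -
        (∑ j ∈ G.erase i, p j) / ((G.card : ℝ) - 1) *
          (((∑ j ∈ G.erase i, x j) - c + x i) / γ) = 0) :
    (∑ i ∈ G, (∑ j ∈ G.erase i, p j) / ((G.card : ℝ) - 1) *
        ((∑ j ∈ G.erase i, x j) - c + x i)) = 0 ∧
    (∀ i ∈ G, (∑ j ∈ G.erase i, p j) / ((G.card : ℝ) - 1) *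
        ((∑ j ∈ G.erase i, x j) - c + x i) = 0) ∧
    (∀ i ∈ G, p i = (∑ j ∈ G.erase i, p j) / ((G.card : ℝ) - 1)) :=
  stmt_2_general G hG p x c γ hγ hp hcap hfoc
end
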